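/- Let V: ℝ → [0,∞) be an Orlicz function, R ∈ (0,∞), and λ: ℝ → ℝ a bounded continuous function. Let α(λ) ∈ (-∞,0) be the unique real number with ∫_ℝ V(x) e^{α(λ)V(x)+λ(x)} dx = R · ∫_ℝ e^{α(λ)V(x)+λ(x)} dx. Then φ_V(α(λ),λ) − α(λ)R = inf_{α < 0} [ φ_V(α,λ) − αR ], i.e., α(λ) is the unique minimizer over (-∞,0) of the strictly convex function α ↦ φ_V(α,λ) − αR. -/

import Mathlib

open MeasureTheory Real Filter Topology ENNReal

noncomputable section

/-- An Orlicz function: convex, symmetric, vanishing only at `0`, nonnegative. -/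
def IsOrlicz (V : ℝ → ℝ) : Prop :=
  ConvexOn ℝ Set.univ V ∧ (∀ x, V (-x) = V x) ∧ V 0 = 0 ∧ (∀ x, x ≠ 0 → 0 < V x) ∧
    (∀ x, 0 ≤ V x)

/-- `φ_V(α, λ) = log ∫ e^{α V(x) + λ(x)} dx`. -/
def phiV (V lam : ℝ → ℝ) (α : ℝ) : ℝ := Real.log (∫ x : ℝ, Real.exp (α * V x + lam x))

/-! The moment condition says that `R` is the mean of `V` under the probability density
proportional to `w = e^{αV+λ}`, and `φ_V(β,λ) - φ_V(α,λ) = log ∫ e^{(β-α)V} w / ∫ w`.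
Integrating the tangent line `e^{sv} ≥ e^{sR} (1 + s (v - R))` against `w` (Jensen's inequality
for `exp`) gives `φ_V(β,λ) - βR ≥ φ_V(α,λ) - αR`. Equality for `β ≠ α` would force `V = R`
almost everywhere, which is impossible since `{V < R}` is a nonempty open set. -/

open Set

theorem integrable_comp_abs_of_integrableOn_Ioi {E : Type*} [NormedAddCommGroup E] {f : ℝ → E}
    (hf : IntegrableOn f (Ioi 0)) : Integrable fun x => f |x| := by
  have hIoi : IntegrableOn (fun x => f |x|) (Ioi 0) :=
    hf.congr_fun (fun x hx => by rw [abs_of_pos hx]) measurableSet_Ioi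
  have hIic : IntegrableOn (fun x => f |x|) (Iic 0) := by
    rw [← (Measure.measurePreserving_neg volume).integrableOn_comp_preimage
      (Homeomorph.neg ℝ).measurableEmbedding]
    simpa only [Function.comp_def, abs_neg, neg_preimage, neg_Iic, neg_zero] using
      (integrableOn_Ici_iff_integrableOn_Ioi).mpr hIoi
  rw [← integrableOn_univ, ← Iic_union_Ioi (a := 0)]
  exact hIic.union hIoi

theorem integrable_exp_neg_mul_abs {b : ℝ} (hb : 0 < b) :
    Integrable fun x : ℝ => exp (-b * |x|) :=
  integrable_comp_abs_of_integrableOn_Ioi (exp_neg_integrableOn_Ioi 0 hb)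

namespace IsOrlicz

variable {V : ℝ → ℝ}

protected theorem continuous (hV : IsOrlicz V) : Continuous V :=
  continuousOn_univ.mp (hV.1.continuousOn isOpen_univ)

theorem mul_abs_sub_one_le (hV : IsOrlicz V) (x : ℝ) : V 1 * (|x| - 1) ≤ V x := by
  obtain ⟨hconv, hsymm, hzero, -, hnonneg⟩ := hV
  rcases le_or_gt |x| 1 with hx | hx
  · nlinarith [hnonneg 1, hnonneg x]
  · have hVabs : V |x| = V x := by
      rcases abs_choice x with h | h <;> simp only [h, hsymm]
    have hslope := hconv.secant_mono (mem_univ 0) (mem_univ 1) (mem_univ |x|) one_ne_zero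
      (by positivity) hx.le
    simp only [hzero, sub_zero, div_one] at hslope
    rw [le_div_iff₀ (by positivity), hVabs] at hslope
    nlinarith [hnonneg 1]

theorem integrable_exp_mul (hV : IsOrlicz V) {β : ℝ} (hβ : β < 0) :
    Integrable fun x => exp (β * V x) := by
  have hb : 0 < -β * V 1 := mul_pos (neg_pos.2 hβ) (hV.2.2.2.1 1 one_ne_zero)
  refine ((integrable_exp_neg_mul_abs hb).const_mul (exp (-β * V 1))).mono'
    (continuous_const.mul hV.continuous).rexp.aestronglyMeasurable
    (Eventually.of_forall fun x => ?_)
  rw [norm_of_nonneg (exp_pos _).le, ← exp_add, exp_le_exp]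
  nlinarith [mul_le_mul_of_nonpos_left (hV.mul_abs_sub_one_le x) hβ.le]

theorem integrable_exp_mul_add (hV : IsOrlicz V) {lam : ℝ → ℝ} {C β : ℝ}
    (hlam : Measurable lam) (hC : ∀ x, lam x ≤ C) (hβ : β < 0) :
    Integrable fun x => exp (β * V x + lam x) := by
  simp only [exp_add]
  refine (hV.integrable_exp_mul hβ).mul_bdd (c := exp C) hlam.exp.aestronglyMeasurable
    (Eventually.of_forall fun x => ?_)
  rw [norm_of_nonneg (exp_pos _).le]
  exact exp_le_exp.2 (hC x)

theorem not_ae_eq (hV : IsOrlicz V) {R : ℝ} (hR : 0 < R) : ¬ ∀ᵐ x, V x = R := by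
  intro h
  have hopen : IsOpen {x | V x < R} := isOpen_lt hV.continuous continuous_const
  have hzero : (0 : ℝ) ∈ {x | V x < R} := by simpa [hV.2.2.1] using hR
  exact (hopen.measure_pos volume ⟨0, hzero⟩).ne'
    (measure_mono_null (fun x hx => ne_of_lt hx) (ae_iff.1 h))

end IsOrlicz

theorem exp_mul_mul_one_add_le (s R v : ℝ) : exp (s * R) * (1 + s * (v - R)) ≤ exp (s * v) :=
  calc exp (s * R) * (1 + s * (v - R))
      ≤ exp (s * R) * exp (s * (v - R)) := by gcongr; linarith [add_one_le_exp (s * (v - R))]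
    _ = exp (s * v) := by rw [← exp_add]; ring_nf

theorem exp_mul_mul_one_add_lt {s R v : ℝ} (hs : s ≠ 0) (hv : v ≠ R) :
    exp (s * R) * (1 + s * (v - R)) < exp (s * v) :=
  calc exp (s * R) * (1 + s * (v - R))
      < exp (s * R) * exp (s * (v - R)) := by
        gcongr; linarith [add_one_lt_exp (mul_ne_zero hs (sub_ne_zero.2 hv))]
    _ = exp (s * v) := by rw [← exp_add]; ring_nf

section Tangent

variable {X : Type*} [MeasurableSpace X] {μ : Measure X} {f w : X → ℝ} {R : ℝ}

theorem integrable_tangent (hw : Integrable w μ) (hfw : Integrable (fun x => f x * w x) μ)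
    (s : ℝ) : Integrable (fun x => exp (s * R) * (1 + s * (f x - R)) * w x) μ :=
  ((hw.const_mul (exp (s * R) * (1 - s * R))).add (hfw.const_mul (exp (s * R) * s))).congr
    (Eventually.of_forall fun x => by simp only [Pi.add_apply]; ring)

theorem integral_tangent (hw : Integrable w μ) (hfw : Integrable (fun x => f x * w x) μ)
    (hmean : ∫ x, f x * w x ∂μ = R * ∫ x, w x ∂μ) (s : ℝ) :
    ∫ x, exp (s * R) * (1 + s * (f x - R)) * w x ∂μ = exp (s * R) * ∫ x, w x ∂μ := by
  have hsplit : (fun x => exp (s * R) * (1 + s * (f x - R)) * w x) =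
      fun x => exp (s * R) * (1 - s * R) * w x + exp (s * R) * s * (f x * w x) := by
    funext x; ring
  rw [hsplit, integral_add (hw.const_mul _) (hfw.const_mul _), integral_const_mul,
    integral_const_mul, hmean]
  ring

theorem exp_mul_mul_integral_le_integral_exp_mul_mul (hw0 : 0 ≤ w) (hw : Integrable w μ)
    (hfw : Integrable (fun x => f x * w x) μ) (hmean : ∫ x, f x * w x ∂μ = R * ∫ x, w x ∂μ)
    {s : ℝ} (hs : Integrable (fun x => exp (s * f x) * w x) μ) :
    exp (s * R) * ∫ x, w x ∂μ ≤ ∫ x, exp (s * f x) * w x ∂μ :=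
  integral_tangent hw hfw hmean s ▸ integral_mono (integrable_tangent hw hfw s) hs
    fun x => mul_le_mul_of_nonneg_right (exp_mul_mul_one_add_le _ _ _) (hw0 x)

theorem ae_eq_of_integral_exp_mul_mul_eq (hw0 : ∀ x, 0 < w x) (hw : Integrable w μ)
    (hfw : Integrable (fun x => f x * w x) μ) (hmean : ∫ x, f x * w x ∂μ = R * ∫ x, w x ∂μ)
    {s : ℝ} (hs0 : s ≠ 0) (hs : Integrable (fun x => exp (s * f x) * w x) μ)
    (heq : ∫ x, exp (s * f x) * w x ∂μ = exp (s * R) * ∫ x, w x ∂μ) :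
    ∀ᵐ x ∂μ, f x = R := by
  have hgap := (integral_eq_zero_iff_of_nonneg
    (fun x => sub_nonneg.2 (mul_le_mul_of_nonneg_right (exp_mul_mul_one_add_le s R (f x))
      (hw0 x).le)) (hs.sub (integrable_tangent hw hfw s))).1
    (by rw [integral_sub hs (integrable_tangent hw hfw s), integral_tangent hw hfw hmean, heq,
      sub_self])
  filter_upwards [hgap] with x hx
  by_contra hne
  exact (mul_lt_mul_of_pos_right (exp_mul_mul_one_add_lt hs0 hne) (hw0 x)).ne'
    (sub_eq_zero.1 hx)

end Tangent

theorem exp_sub_mul_mul_exp_mul_add (α β v u : ℝ) :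
    exp ((β - α) * v) * exp (α * v + u) = exp (β * v + u) := by
  rw [← exp_add]; ring_nf

section LogPartition

variable {X : Type*} [MeasurableSpace X] {μ : Measure X} {f g : X → ℝ} {α β R : ℝ}

theorem log_integral_exp_mul_add_sub_le [NeZero μ]
    (hα : Integrable (fun x => exp (α * f x + g x)) μ)
    (hfα : Integrable (fun x => f x * exp (α * f x + g x)) μ)
    (hmean : ∫ x, f x * exp (α * f x + g x) ∂μ = R * ∫ x, exp (α * f x + g x) ∂μ)
    (hβ : Integrable (fun x => exp (β * f x + g x)) μ) :
    log (∫ x, exp (α * f x + g x) ∂μ) - α * R ≤ log (∫ x, exp (β * f x + g x) ∂μ) - β * R := by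
  have key : exp ((β - α) * R) * ∫ x, exp (α * f x + g x) ∂μ ≤ ∫ x, exp (β * f x + g x) ∂μ := by
    simpa only [exp_sub_mul_mul_exp_mul_add] using
      exp_mul_mul_integral_le_integral_exp_mul_mul (fun x => (exp_pos _).le) hα hfα hmean
        (s := β - α) (by simpa only [exp_sub_mul_mul_exp_mul_add] using hβ)
  have hlog := log_le_log (by have := integral_exp_pos hα; positivity) key
  rw [log_mul (exp_ne_zero _) (integral_exp_pos hα).ne', log_exp] at hlog
  linarith

theorem ae_eq_of_log_integral_exp_mul_add_sub_eq [NeZero μ]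
    (hα : Integrable (fun x => exp (α * f x + g x)) μ)
    (hfα : Integrable (fun x => f x * exp (α * f x + g x)) μ)
    (hmean : ∫ x, f x * exp (α * f x + g x) ∂μ = R * ∫ x, exp (α * f x + g x) ∂μ)
    (hβ : Integrable (fun x => exp (β * f x + g x)) μ) (hne : β ≠ α)
    (heq : log (∫ x, exp (β * f x + g x) ∂μ) - β * R
      = log (∫ x, exp (α * f x + g x) ∂μ) - α * R) :
    ∀ᵐ x ∂μ, f x = R := by
  have hZ : ∫ x, exp (β * f x + g x) ∂μ = exp ((β - α) * R) * ∫ x, exp (α * f x + g x) ∂μ := by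
    rw [← exp_log (integral_exp_pos hβ), ← exp_log (integral_exp_pos hα), ← exp_add]
    congr 1
    linarith
  refine ae_eq_of_integral_exp_mul_mul_eq (fun x => exp_pos _) hα hfα hmean (sub_ne_zero.2 hne)
    (by simpa only [exp_sub_mul_mul_exp_mul_add] using hβ) ?_
  simpa only [exp_sub_mul_mul_exp_mul_add] using hZ

end LogPartition

/-- `α(λ)` is the minimizer of `α ↦ φ_V(α,λ) - αR` over `(-∞, 0)`:
the minimum is attained at `α(λ)` (in particular the value there equals the infimum),
and `α(λ)` is the unique minimizer. -/
theorem stmt1 (V : ℝ → ℝ) (hV : IsOrlicz V) (R : ℝ) (hR : 0 < R)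
    (lam : ℝ → ℝ) (hlamCont : Continuous lam) (hlamBdd : ∃ C : ℝ, ∀ x, |lam x| ≤ C)
    (α : ℝ) (hα : α < 0)
    (hαeq : (∫ x : ℝ, V x * Real.exp (α * V x + lam x))
        = R * ∫ x : ℝ, Real.exp (α * V x + lam x)) :
    IsLeast ((fun β : ℝ => phiV V lam β - β * R) '' Set.Iio (0 : ℝ))
      (phiV V lam α - α * R) ∧
    ∀ β : ℝ, β < 0 → phiV V lam β - β * R = phiV V lam α - α * R → β = α := by
  obtain ⟨C, hC⟩ := hlamBdd
  have hZ : ∀ β < 0, Integrable fun x => exp (β * V x + lam x) := fun β hβ =>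
    hV.integrable_exp_mul_add hlamCont.measurable (fun x => (abs_le.1 (hC x)).2) hβ
  -- the right-hand side of `hαeq` is positive, so its left-hand side is not a junk value
  have hVα : Integrable fun x => V x * exp (α * V x + lam x) := by
    by_contra h
    rw [integral_undef h] at hαeq
    exact (mul_pos hR (integral_exp_pos (hZ α hα))).ne' hαeq.symm
  refine ⟨⟨⟨α, hα, rfl⟩, ?_⟩, fun β hβ heq => ?_⟩
  · rintro _ ⟨β, hβ, rfl⟩
    exact log_integral_exp_mul_add_sub_le (hZ α hα) hVα hαeq (hZ β hβ)
  · by_contra hne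
    exact hV.not_ae_eq hR
      (ae_eq_of_log_integral_exp_mul_add_sub_eq (hZ α hα) hVα hαeq (hZ β hβ) hne heq)
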